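/- arXiv:1211.4853 — 5 statements merged into one kernel-verified Lean document; each statement's English description precedes it below -/
import Mathlib

section
/- Let ℓ be an integer with ℓ ≥ 6. Then among all tuples (x, y, z, s) of natural numbers satisfying x + y + z - s = C(ℓ,2) - ℓ (i.e., x + y + z = C(ℓ,2) - ℓ + s) and x ≤ C(s,2), the objective x + 2y + 3z is uniquely minimized at x = C(ℓ,2), y = 0, z = 0, s = ℓ, where the minimum value is C(ℓ,2). -/
lemma two_choose_two (n : ℕ) : 2 * n.choose 2 = n * (n - 1) := by
  induction n with
  | zero => simp
  | succ m ih =>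
    rw [Nat.choose_succ_succ, Nat.choose_one_right]
    cases m with
    | zero => simp
    | succ k => simp only [Nat.succ_sub_one] at *; ring_nf; ring_nf at ih; omega

lemma key (s ℓ : ℕ) (hs : s < ℓ) (hℓ : 6 ≤ ℓ) :
    s.choose 2 + 2 * ℓ < ℓ.choose 2 + 2 * s := by
  have h1 := two_choose_two s
  have h2 := two_choose_two ℓ
  cases s with
  | zero =>
    simp only [Nat.choose_zero_succ] at *
    have h3 : ℓ * 5 ≤ ℓ * (ℓ - 1) := Nat.mul_le_mul_left ℓ (by omega)
    nlinarith
  | succ t =>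
    simp only [Nat.succ_sub_one] at h1
    have hℓ1 : ℓ - 1 + 1 = ℓ := by omega
    nlinarith [Nat.mul_le_mul_right (ℓ - 1) (show t + 1 ≤ ℓ - 1 by omega),
      Nat.mul_le_mul_left (t + 1) (show t ≤ ℓ - 1 by omega)]

theorem stmt_0 (ℓ : ℕ) (hℓ : 6 ≤ ℓ) :
    (ℓ.choose 2 + 0 + 0 + ℓ = ℓ.choose 2 + ℓ ∧ ℓ.choose 2 ≤ ℓ.choose 2 ∧
      ℓ.choose 2 + 2 * 0 + 3 * 0 = ℓ.choose 2) ∧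
    ∀ x y z s : ℕ, x + y + z + ℓ = ℓ.choose 2 + s → x ≤ s.choose 2 →
      ℓ.choose 2 ≤ x + 2 * y + 3 * z ∧
      (x + 2 * y + 3 * z = ℓ.choose 2 →
        x = ℓ.choose 2 ∧ y = 0 ∧ z = 0 ∧ s = ℓ) := by
  refine ⟨⟨rfl, le_refl _, rfl⟩, ?_⟩
  intro x y z s hsum hx
  rcases lt_or_ge s ℓ with hs | hs
  · have := key s ℓ hs hℓ
    omega
  · omega
end

section
/- Let ℓ ≥ 6 be an integer and let x, y, z, s be natural numbers with x + y + z + ℓ = C(ℓ,2) + s, x ≤ C(s,2), and x + 2y + 3z = C(ℓ,2). Then x = C(ℓ,2), y = 0, z = 0, and s = ℓ. -/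
/-! Subtracting the two linear constraints gives `y + 2z + s = ℓ`, so `2y + 3z ≤ 2(ℓ - s)` and
`x ≥ C(ℓ,2) - 2(ℓ - s)`. Since `C(ℓ,2) - C(s,2) = (ℓ - s)(ℓ + s - 1)/2` exceeds `2(ℓ - s)` whenever
`s < ℓ` and `ℓ + s ≥ 6`, the bound `x ≤ C(s,2)` forces `s = ℓ`, and then `y = z = 0`. -/

lemma choose_two_add_two_mul_lt {s ℓ : ℕ} (hsℓ : s < ℓ) (h6 : 6 ≤ ℓ + s) :
    s.choose 2 + 2 * ℓ < ℓ.choose 2 + 2 * s := by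
  have hgap : (0 : ℚ) < ((ℓ : ℚ) - s) * ((ℓ : ℚ) + s - 5) := by
    apply mul_pos
    · exact sub_pos.mpr (by exact_mod_cast hsℓ)
    · have : (6 : ℚ) ≤ ℓ + s := by exact_mod_cast h6
      linarith
  qify
  rw [Nat.cast_choose_two, Nat.cast_choose_two]
  nlinarith

theorem stmt_2 (ℓ : ℕ) (hℓ : 6 ≤ ℓ) (x y z s : ℕ)
    (hconstr : x + y + z + ℓ = ℓ.choose 2 + s) (hx : x ≤ s.choose 2)
    (hobj : x + 2 * y + 3 * z = ℓ.choose 2) :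
    x = ℓ.choose 2 ∧ y = 0 ∧ z = 0 ∧ s = ℓ := by
  have hslack : y + 2 * z + s = ℓ := by omega
  obtain rfl | hsℓ := (show s ≤ ℓ by omega).eq_or_lt
  · omega
  · have := choose_two_add_two_mul_lt hsℓ (by omega)
    omega
end

section
/- Let E₁, …, E_p be disjoint finite sets with capacities 0 ≤ dᵢ ≤ |Eᵢ|, set cᵢ = |Eᵢ| - dᵢ, and let r(E ∖ X) = Σᵢ min(|Eᵢ ∖ X|, dᵢ). Suppose X ⊆ E is inclusion-wise minimal with the property that r(E ∖ X) ≤ Σᵢ dᵢ - k for a given 1 ≤ k ≤ Σᵢ dᵢ. Then for each i, either Eᵢ ∩ X = ∅ or |Eᵢ ∩ X| ≥ cᵢ + 1; moreover, letting J = { i : Eᵢ ∩ X ≠ ∅ }, one has Σ_{i ∈ J} dᵢ ≥ k and |X| = k + Σ_{i ∈ J} cᵢ. -/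
/-- Structure of inclusion-wise minimal rank-reduction sets in a partition matroid. -/
theorem stmt_9 {α : Type*} [DecidableEq α] (p : ℕ) (E : Fin p → Finset α)
    (d : Fin p → ℕ) (hdisj : ∀ i j, i ≠ j → Disjoint (E i) (E j))
    (hd : ∀ i, d i ≤ (E i).card) (k : ℕ) (hk1 : 1 ≤ k) (hk2 : k ≤ ∑ i, d i)
    (X : Finset α) (hX : X ⊆ Finset.univ.biUnion E)
    (hred : ∑ i, min ((E i \ X).card) (d i) + k ≤ ∑ i, d i)
    (hmin : ∀ X' ⊆ X, (∑ i, min ((E i \ X').card) (d i) + k ≤ ∑ i, d i) → X' = X) :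
    (∀ i, E i ∩ X = ∅ ∨ ((E i).card - d i) + 1 ≤ (E i ∩ X).card) ∧
    k ≤ ∑ i ∈ Finset.univ.filter (fun i => E i ∩ X ≠ ∅), d i ∧
    X.card = k + ∑ i ∈ Finset.univ.filter (fun i => E i ∩ X ≠ ∅),
      ((E i).card - d i) := by
  classical
  have hEX : ∀ i, (E i ∩ X).card + (E i \ X).card = (E i).card := fun i =>
    Finset.card_inter_add_card_sdiff _ _
  -- Step A: each nonempty intersection has size ≥ c_i + 1
  have claim1 : ∀ i, E i ∩ X = ∅ ∨ ((E i).card - d i) + 1 ≤ (E i ∩ X).card := by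
    intro i
    by_contra h
    push_neg at h
    obtain ⟨hne, hle⟩ := h
    have hle' : (E i ∩ X).card ≤ (E i).card - d i := Nat.lt_succ_iff.mp hle
    have hdi : min ((E i \ X).card) (d i) = d i := by
      have h1 := hEX i
      have h2 := hd i
      have : d i ≤ (E i \ X).card := by omega
      exact min_eq_right this
    have hEj : ∀ j, j ≠ i → E j \ (X \ E i) = E j \ X := by
      intro j hj
      ext x
      simp only [Finset.mem_sdiff]
      constructor
      · rintro ⟨hxj, hx⟩
        exact ⟨hxj, fun hxX =>
          hx ⟨hxX, fun hxi => (Finset.disjoint_left.mp (hdisj j i hj) hxj) hxi⟩⟩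
      · rintro ⟨hxj, hx⟩
        exact ⟨hxj, fun hmem => hx hmem.1⟩
    have hEi : E i \ (X \ E i) = E i := by
      ext x
      simp only [Finset.mem_sdiff]
      tauto
    have hsum' : ∑ j, min ((E j \ (X \ E i)).card) (d j) + k ≤ ∑ j, d j := by
      have heq : ∀ j ∈ Finset.univ,
          min ((E j \ (X \ E i)).card) (d j) = min ((E j \ X).card) (d j) := by
        intro j _
        by_cases hji : j = i
        · subst hji
          rw [hEi, hdi, min_eq_right (hd j)]
        · rw [hEj j hji]
      rw [Finset.sum_congr rfl heq]
      exact hred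
    have hXX := hmin (X \ E i) Finset.sdiff_subset hsum'
    obtain ⟨x, hx⟩ := hne
    rw [Finset.mem_inter] at hx
    have hx' : x ∈ X \ E i := by rw [hXX]; exact hx.2
    rw [Finset.mem_sdiff] at hx'
    exact hx'.2 hx.1
  -- Step B: the rank drop is exactly k
  have hsumeq : ∑ i, min ((E i \ X).card) (d i) + k = ∑ i, d i := by
    rcases eq_or_lt_of_le hred with h | h
    · exact h
    · exfalso
      have hex : ∃ i, (E i \ X).card < d i := by
        by_contra hc
        push_neg at hc
        have heq : ∑ i, min ((E i \ X).card) (d i) = ∑ i, d i :=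
          Finset.sum_congr rfl (fun i _ => min_eq_right (hc i))
        rw [heq] at h
        omega
      obtain ⟨i, hi⟩ := hex
      have h1 := hEX i
      have h2 := hd i
      have hne : (E i ∩ X).Nonempty := by
        rw [← Finset.card_pos]; omega
      obtain ⟨x, hx⟩ := hne
      rw [Finset.mem_inter] at hx
      have hEj : ∀ j, j ≠ i → E j \ (X \ {x}) = E j \ X := by
        intro j hj
        have hxj : x ∉ E j := Finset.disjoint_left.mp (hdisj i j (Ne.symm hj)) hx.1
        ext y
        simp only [Finset.mem_sdiff, Finset.mem_singleton]
        constructor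
        · rintro ⟨hyj, hy⟩
          exact ⟨hyj, fun hyX => hy ⟨hyX, fun hyx => hxj (hyx ▸ hyj)⟩⟩
        · rintro ⟨hyj, hy⟩
          exact ⟨hyj, fun hmem => hy hmem.1⟩
      have hEi : E i \ (X \ {x}) = insert x (E i \ X) := by
        ext y
        simp only [Finset.mem_sdiff, Finset.mem_singleton, Finset.mem_insert]
        constructor
        · rintro ⟨hyj, hy⟩
          by_cases hyx : y = x
          · exact Or.inl hyx
          · exact Or.inr ⟨hyj, fun hyX => hy ⟨hyX, hyx⟩⟩
        · rintro (rfl | ⟨hyj, hy⟩)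
          · exact ⟨hx.1, fun hmem => hmem.2 rfl⟩
          · exact ⟨hyj, fun hmem => hy hmem.1⟩
      have hcardi : (E i \ (X \ {x})).card = (E i \ X).card + 1 := by
        rw [hEi, Finset.card_insert_of_notMem]
        simp only [Finset.mem_sdiff]
        exact fun hmem => hmem.2 hx.2
      have hnewi : min ((E i \ (X \ {x})).card) (d i)
          = min ((E i \ X).card) (d i) + 1 := by
        rw [hcardi, min_eq_left (by omega), min_eq_left (by omega)]
      have hsum' : ∑ j, min ((E j \ (X \ {x})).card) (d j) + k ≤ ∑ j, d j := by
        have e1 := Finset.sum_erase_add Finset.univ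
          (fun j => min ((E j \ (X \ {x})).card) (d j)) (Finset.mem_univ i)
        have e2 := Finset.sum_erase_add Finset.univ
          (fun j => min ((E j \ X).card) (d j)) (Finset.mem_univ i)
        have e3 : ∑ j ∈ Finset.univ.erase i, min ((E j \ (X \ {x})).card) (d j)
            = ∑ j ∈ Finset.univ.erase i, min ((E j \ X).card) (d j) := by
          refine Finset.sum_congr rfl (fun j hj => ?_)
          rw [hEj j (Finset.ne_of_mem_erase hj)]
        omega
      have hXX := hmin (X \ {x}) Finset.sdiff_subset hsum'
      have hx' : x ∈ X \ {x} := by rw [hXX]; exact hx.2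
      simp at hx'
  -- notation for the filter set
  set J := Finset.univ.filter (fun i : Fin p => E i ∩ X ≠ ∅) with hJ
  -- card of X
  have hXcard : X.card = ∑ i, (E i ∩ X).card := by
    have hXeq : X = Finset.univ.biUnion (fun i => E i ∩ X) := by
      ext x
      simp only [Finset.mem_biUnion, Finset.mem_univ, true_and, Finset.mem_inter]
      constructor
      · intro hxX
        obtain ⟨i, _, hi⟩ := Finset.mem_biUnion.mp (hX hxX)
        exact ⟨i, hi, hxX⟩
      · rintro ⟨i, _, hxX⟩
        exact hxX
    calc X.card = (Finset.univ.biUnion (fun i => E i ∩ X)).card := by rw [← hXeq]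
      _ = ∑ i, (E i ∩ X).card := ?_
    apply Finset.card_biUnion
    intro i _ j _ hij
    exact Finset.disjoint_of_subset_left Finset.inter_subset_left
      (Finset.disjoint_of_subset_right Finset.inter_subset_left (hdisj i j hij))
  -- split sums over J
  have hsplit : ∀ g : Fin p → ℕ,
      ∑ i, g i = ∑ i ∈ J, g i + ∑ i ∈ Finset.univ.filter (fun i => ¬ (E i ∩ X ≠ ∅)), g i :=
    fun g => (Finset.sum_filter_add_sum_filter_not _ _ _).symm
  -- facts for i ∉ J
  have hnotJ : ∀ i ∈ Finset.univ.filter (fun i => ¬ (E i ∩ X ≠ ∅)),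
      (E i ∩ X).card = 0 ∧ min ((E i \ X).card) (d i) = d i := by
    intro i hi
    simp only [Finset.mem_filter, not_not] at hi
    have h0 : (E i ∩ X).card = 0 := by rw [hi.2]; rfl
    refine ⟨h0, ?_⟩
    have := hEX i
    have := hd i
    have : d i ≤ (E i \ X).card := by omega
    exact min_eq_right this
  -- facts for i ∈ J
  have hinJ : ∀ i ∈ J,
      min ((E i \ X).card) (d i) = (E i \ X).card ∧
      ((E i).card - d i) + 1 ≤ (E i ∩ X).card := by
    intro i hi
    simp only [hJ, Finset.mem_filter] at hi
    have hc := (claim1 i).resolve_left hi.2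
    have h1 := hEX i
    have h2 := hd i
    refine ⟨min_eq_left (by omega), hc⟩
  -- assemble sums
  have hS1 : ∑ i ∈ J, min ((E i \ X).card) (d i) = ∑ i ∈ J, (E i \ X).card :=
    Finset.sum_congr rfl (fun i hi => (hinJ i hi).1)
  have hS2 : ∑ i ∈ Finset.univ.filter (fun i => ¬ (E i ∩ X ≠ ∅)),
      min ((E i \ X).card) (d i)
      = ∑ i ∈ Finset.univ.filter (fun i => ¬ (E i ∩ X ≠ ∅)), d i :=
    Finset.sum_congr rfl (fun i hi => (hnotJ i hi).2)
  have hS3 : ∑ i ∈ Finset.univ.filter (fun i => ¬ (E i ∩ X ≠ ∅)),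
      (E i ∩ X).card = 0 :=
    Finset.sum_eq_zero (fun i hi => (hnotJ i hi).1)
  -- key: sum over J of (E i \ X).card + k = sum over J of d i
  have hkey : ∑ i ∈ J, (E i \ X).card + k = ∑ i ∈ J, d i := by
    have e1 := hsplit (fun i => min ((E i \ X).card) (d i))
    have e2 := hsplit d
    rw [e1, e2, hS1, hS2] at hsumeq
    omega
  -- sum identities over J
  have hA : ∑ i ∈ J, (E i ∩ X).card + ∑ i ∈ J, (E i \ X).card = ∑ i ∈ J, (E i).card := by
    rw [← Finset.sum_add_distrib]
    exact Finset.sum_congr rfl (fun i _ => hEX i)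
  have hC : ∑ i ∈ J, ((E i).card - d i) + ∑ i ∈ J, d i = ∑ i ∈ J, (E i).card := by
    rw [← Finset.sum_add_distrib]
    exact Finset.sum_congr rfl (fun i _ => Nat.sub_add_cancel (hd i))
  have hXc : X.card = ∑ i ∈ J, (E i ∩ X).card := by
    rw [hXcard, hsplit (fun i => (E i ∩ X).card), hS3]
    omega
  refine ⟨claim1, by omega, by omega⟩
end

section
/- The minimum size of a set X ⊆ E with Σᵢ min(|Eᵢ ∖ X|, dᵢ) ≤ Σᵢ dᵢ - k equals the minimum over all J ⊆ {1,…,p} with Σ_{i∈J} dᵢ ≥ k of k + Σ_{i∈J} cᵢ, where cᵢ = |Eᵢ| - dᵢ. -/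
/-!
Given a feasible `J`, any set of `k + ∑_{i ∈ J} cᵢ` elements of `⋃_{i ∈ J} Eᵢ` lowers the rank
by at least `k`. Conversely, if `X` meets `Eᵢ` in `xᵢ` elements, block `i` loses `(xᵢ - cᵢ)⁺ ≤ dᵢ`
units of rank, so the blocks with `xᵢ > cᵢ` form a feasible `J` with
`k + ∑_{i ∈ J} cᵢ ≤ ∑_{i ∈ J} xᵢ ≤ |X|`.
-/

open Finset Function

section PartitionMatroid

variable {α ι : Type*} [DecidableEq α] {E : ι → Finset α} {d : ι → ℕ} {k : ℕ}

theorem card_biUnion_inter_of_pairwise_disjoint (hE : Pairwise (Disjoint on E))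
    (J : Finset ι) (X : Finset α) :
    (J.biUnion E ∩ X).card = ∑ i ∈ J, (E i ∩ X).card := by
  rw [biUnion_inter, card_biUnion]
  exact fun i _ j _ hij => (hE hij).mono inter_subset_left inter_subset_left

theorem sum_card_inter_le_card (hE : Pairwise (Disjoint on E)) (J : Finset ι) (X : Finset α) :
    ∑ i ∈ J, (E i ∩ X).card ≤ X.card :=
  card_biUnion_inter_of_pairwise_disjoint hE J X ▸ card_le_card inter_subset_right

theorem sum_card_inter_eq_card_of_subset (hE : Pairwise (Disjoint on E)) {J : Finset ι}
    {X : Finset α} (hX : X ⊆ J.biUnion E) :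
    ∑ i ∈ J, (E i ∩ X).card = X.card := by
  rw [← card_biUnion_inter_of_pairwise_disjoint hE, inter_eq_right.2 hX]

variable [Fintype ι]

/-- `∑ i, min (E i \ X).card (d i)` is the rank of `E \ X` in the partition matroid with blocks
`E i` and capacities `d i`, and `∑ i, d i` is the rank of `E` when `d i ≤ (E i).card`. -/
def IsRankReducing (E : ι → Finset α) (d : ι → ℕ) (k : ℕ) (X : Finset α) : Prop :=
  ∑ i, min (E i \ X).card (d i) + k ≤ ∑ i, d i

theorem exists_isRankReducing_of_le_sum [DecidableEq ι] (hE : Pairwise (Disjoint on E))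
    (hd : ∀ i, d i ≤ (E i).card) {J : Finset ι} (hJ : k ≤ ∑ i ∈ J, d i) :
    ∃ X ⊆ J.biUnion E, X.card = k + ∑ i ∈ J, ((E i).card - d i) ∧ IsRankReducing E d k X := by
  have hsplit : ∑ i ∈ J, (E i).card = ∑ i ∈ J, ((E i).card - d i) + ∑ i ∈ J, d i := by
    rw [← sum_add_distrib]
    exact sum_congr rfl fun i _ => (Nat.sub_add_cancel (hd i)).symm
  have hcard : k + ∑ i ∈ J, ((E i).card - d i) ≤ (J.biUnion E).card := by
    rw [card_biUnion fun i _ j _ hij => hE hij]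
    omega
  obtain ⟨X, hXJ, hX⟩ := exists_subset_card_eq hcard
  refine ⟨X, hXJ, hX, ?_⟩
  have hblocks : ∑ i ∈ J, (E i \ X).card + X.card = ∑ i ∈ J, (E i).card := by
    rw [← sum_card_inter_eq_card_of_subset hE hXJ, ← sum_add_distrib]
    exact sum_congr rfl fun i _ => card_sdiff_add_card_inter (E i) X
  have hin : ∑ i ∈ J, min (E i \ X).card (d i) ≤ ∑ i ∈ J, (E i \ X).card :=
    sum_le_sum fun i _ => min_le_left _ _
  have hout : ∑ i ∈ Jᶜ, min (E i \ X).card (d i) ≤ ∑ i ∈ Jᶜ, d i :=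
    sum_le_sum fun i _ => min_le_right _ _
  unfold IsRankReducing
  rw [← sum_add_sum_compl J, ← sum_add_sum_compl J d]
  omega

theorem exists_le_sum_of_isRankReducing (hE : Pairwise (Disjoint on E))
    (hd : ∀ i, d i ≤ (E i).card) {X : Finset α} (hX : IsRankReducing E d k X) :
    ∃ J : Finset ι, k ≤ ∑ i ∈ J, d i ∧ k + ∑ i ∈ J, ((E i).card - d i) ≤ X.card := by
  obtain ⟨excess, hexcess⟩ : ∃ excess : ι → ℕ,
      ∀ i, excess i = (E i ∩ X).card - ((E i).card - d i) := ⟨_, fun _ => rfl⟩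
  have hblock (i : ι) : (E i \ X).card + (E i ∩ X).card = (E i).card ∧ d i ≤ (E i).card ∧
      excess i = (E i ∩ X).card - ((E i).card - d i) :=
    ⟨card_sdiff_add_card_inter (E i) X, hd i, hexcess i⟩
  have hloss : ∑ i, d i ≤ ∑ i, min (E i \ X).card (d i) + ∑ i, excess i := by
    rw [← sum_add_distrib]
    exact sum_le_sum fun i _ => by have := hblock i; omega
  have hk : k ≤ ∑ i with excess i ≠ 0, excess i := by
    rw [sum_filter_ne_zero]
    unfold IsRankReducing at hX
    omega
  refine ⟨({i | excess i ≠ 0} : Finset ι), ?_, ?_⟩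
  · exact hk.trans (sum_le_sum fun i _ => by have := hblock i; omega)
  · calc k + ∑ i with excess i ≠ 0, ((E i).card - d i)
        ≤ ∑ i with excess i ≠ 0, (excess i + ((E i).card - d i)) := by
          rw [sum_add_distrib]; omega
      _ = ∑ i with excess i ≠ 0, (E i ∩ X).card :=
          sum_congr rfl fun i hi => by have := (mem_filter.1 hi).2; have := hblock i; omega
      _ ≤ X.card := sum_card_inter_le_card hE _ X

end PartitionMatroid

theorem stmt_11_general {α : Type*} [DecidableEq α] (p : ℕ) (E : Fin p → Finset α)
    (d : Fin p → ℕ) (hdisj : ∀ i j, i ≠ j → Disjoint (E i) (E j))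
    (hd : ∀ i, d i ≤ (E i).card) (k : ℕ) :
    sInf {n : ℕ | ∃ X ⊆ Finset.univ.biUnion E, X.card = n ∧
        ∑ i, min ((E i \ X).card) (d i) + k ≤ ∑ i, d i} =
    sInf {n : ℕ | ∃ J : Finset (Fin p), k ≤ ∑ i ∈ J, d i ∧
        n = k + ∑ i ∈ J, ((E i).card - d i)} := by
  apply csInf_eq_csInf_of_forall_exists_le
  · rintro _ ⟨X, -, rfl, hX⟩
    obtain ⟨J, hJ, hJX⟩ := exists_le_sum_of_isRankReducing hdisj hd hX
    exact ⟨_, ⟨J, hJ, rfl⟩, hJX⟩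
  · rintro _ ⟨J, hJ, rfl⟩
    obtain ⟨X, hXJ, hX, hred⟩ := exists_isRankReducing_of_le_sum hdisj hd hJ
    exact ⟨X.card, ⟨X, hXJ.trans (biUnion_subset_biUnion_of_subset_left E (subset_univ J)), rfl,
      hred⟩, hX.le⟩

/-- The rank reduction problem on a partition matroid equals a knapsack-type
minimization. -/
theorem stmt_11 {α : Type*} [DecidableEq α] (p : ℕ) (E : Fin p → Finset α)
    (d : Fin p → ℕ) (hdisj : ∀ i j, i ≠ j → Disjoint (E i) (E j))
    (hd : ∀ i, d i ≤ (E i).card) (k : ℕ) (hk1 : 1 ≤ k) (hk2 : k ≤ ∑ i, d i) :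
    sInf {n : ℕ | ∃ X ⊆ Finset.univ.biUnion E, X.card = n ∧
        ∑ i, min ((E i \ X).card) (d i) + k ≤ ∑ i, d i} =
    sInf {n : ℕ | ∃ J : Finset (Fin p), k ≤ ∑ i ∈ J, d i ∧
        n = k + ∑ i ∈ J, ((E i).card - d i)} :=
  stmt_11_general p E d hdisj hd k
end

section
/- Let H be a graph containing a clique K on ℓ vertices, ℓ ≥ 6, and let G be the bipartite graph constructed from H as in the reduction. Then the set X = {a_u, b_u : u ∈ V(K)} ∪ {a_u : u ∈ V(H) ∖ V(K)} ∪ {a_e : e ∈ E(H) ∖ E(K)} has size |V(H)| + |E(H)| - C(ℓ,2) + ℓ and covers exactly ‖G‖ - C(ℓ,2) edges of G. -/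
/-! The only edges of `G` avoiding `X` are the rungs `a_e b_e` with `e ∈ E(K)`: a vertex `u`
is hit by `a_u`, an edge `e ⊄ K` by `a_e`, and an edge `a_e b_u` with `e ⊆ K` by `b_u`. So `X`
misses exactly `C(ℓ, 2)` edges, and counting `X` by the kind of its vertices gives its size. -/

/-- The graph `G` built from a graph `H` in the reduction: vertices `a_x = (x, false)`
and `b_x = (x, true)` for `x ∈ V(H) ⊕ E(H)`, edges `a_x b_x` for each `x`, and edges
`a_e b_u`, `b_e a_u`, `a_e b_v`, `b_e a_v` for each edge `e = uv` of `H`. -/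
def redGraph {V : Type*} (H : SimpleGraph V) : SimpleGraph ((V ⊕ Sym2 V) × Bool) where
  Adj p q := p.2 ≠ q.2 ∧
    ((p.1 = q.1 ∧ ∀ e : Sym2 V, p.1 = Sum.inr e → e ∈ H.edgeSet) ∨
      ∃ (v : V) (e : Sym2 V), e ∈ H.edgeSet ∧ v ∈ e ∧
        ((p.1 = Sum.inl v ∧ q.1 = Sum.inr e) ∨ (q.1 = Sum.inl v ∧ p.1 = Sum.inr e)))
  symm := by
    constructor
    rintro p q ⟨hne, h⟩
    refine ⟨hne.symm, ?_⟩
    rcases h with ⟨h1, h2⟩ | ⟨v, e, he, hv, h⟩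
    · exact Or.inl ⟨h1.symm, by rw [← h1]; exact h2⟩
    · exact Or.inr ⟨v, e, he, hv, h.symm⟩
  loopless := by constructor; rintro p ⟨h, -⟩; exact h rfl

section

variable {V : Type*} (H : SimpleGraph V)

def edgesIn (K : Set V) : Set (Sym2 V) := {e ∈ H.edgeSet | ∀ v ∈ e, v ∈ K}

lemma ncard_edgesIn_of_isClique {K : Finset V} (hK : H.IsClique (K : Set V)) :
    (edgesIn H K).ncard = K.card.choose 2 := by
  classical
  have hedges : edgesIn H K = ↑(K.sym2.filter (¬ ·.IsDiag)) := by
    ext e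
    induction e using Sym2.ind with
    | _ u v =>
      simp only [edgesIn, Set.mem_ofPred_eq, SimpleGraph.mem_edgeSet, Sym2.mem_iff,
        forall_eq_or_imp, forall_eq, Finset.coe_filter, Finset.mk_mem_sym2_iff, Sym2.mk_isDiag_iff]
      exact ⟨fun ⟨huv, hK'⟩ => ⟨hK', huv.ne⟩, fun ⟨⟨hu, hv⟩, hne⟩ => ⟨hK hu hv hne, hu, hv⟩⟩
  rw [hedges, Set.ncard_coe_finset, Finset.sym2_eq_image, Sym2.filter_image_mk_not_isDiag,
    Sym2.card_image_offDiag]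

def cliqueCover (K : Set V) : Set ((V ⊕ Sym2 V) × Bool) := {p | match p with
  | (.inl _, false) => True
  | (.inl u, true) => u ∈ K
  | (.inr e, false) => e ∈ H.edgeSet \ edgesIn H K
  | (.inr _, true) => False}

lemma cliqueCover_eq_union (K : Set V) :
    cliqueCover H K = (Set.range fun u => (.inl u, false)) ∪ (fun u => (.inl u, true)) '' K
      ∪ (fun e => (.inr e, false)) '' (H.edgeSet \ edgesIn H K) := by
  ext ⟨u | e, _ | _⟩ <;> simp [cliqueCover]

lemma ncard_cliqueCover_add_ncard_edgesIn [Finite V] (K : Set V) :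
    (cliqueCover H K).ncard + (edgesIn H K).ncard = Nat.card V + K.ncard + H.edgeSet.ncard := by
  have hinl (b : Bool) : Function.Injective fun u : V => ((.inl u : V ⊕ Sym2 V), b) :=
    fun u v h => by simpa using h
  have hinr : Function.Injective fun e : Sym2 V => ((.inr e : V ⊕ Sym2 V), false) :=
    fun e f h => by simpa using h
  rw [cliqueCover_eq_union, Set.ncard_union_eq, Set.ncard_union_eq,
    Set.ncard_range_of_injective (hinl false), Set.ncard_image_of_injective _ (hinl true),
    Set.ncard_image_of_injective _ hinr, add_assoc,
    Set.ncard_sdiff_add_ncard_of_subset (s := edgesIn H K) (Set.sep_subset _ _)]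
  all_goals simp [Set.disjoint_left]

lemma eq_inr_of_redGraph_adj_of_notMem_cliqueCover {K : Set V} {x y : V ⊕ Sym2 V}
    (hadj : (redGraph H).Adj (x, false) (y, true)) (hx : (x, false) ∉ cliqueCover H K)
    (hy : (y, true) ∉ cliqueCover H K) : ∃ e ∈ edgesIn H K, x = .inr e ∧ y = .inr e := by
  obtain ⟨-, ⟨rfl, hy'⟩ | ⟨v, e, he, hv, ⟨hxv, -⟩ | ⟨rfl, rfl⟩⟩⟩ := hadj
  · cases x with
    | inl u => exact (hx trivial).elim
    | inr e =>
      have he : e ∈ edgesIn H K := by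
        by_contra hne
        exact hx ⟨hy' e rfl, hne⟩
      exact ⟨e, he, rfl, rfl⟩
  · obtain rfl : x = .inl v := hxv
    exact (hx trivial).elim
  · have he : e ∈ edgesIn H K := by
      by_contra hne
      exact hx ⟨he, hne⟩
    exact absurd (he.2 v hv) hy

def abEdge (x : V ⊕ Sym2 V) : Sym2 ((V ⊕ Sym2 V) × Bool) := s((x, false), (x, true))

lemma abEdge_injective : Function.Injective (abEdge (V := V)) := fun x y h => by
  simpa [abEdge] using h

lemma redGraph_edgesAvoiding_cliqueCover_eq_image (K : Set V) :
    {ed ∈ (redGraph H).edgeSet | ¬ ∃ p ∈ cliqueCover H K, p ∈ ed} =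
      (abEdge ∘ .inr) '' edgesIn H K := by
  ext ed
  constructor
  · rintro ⟨hadj, hunc⟩
    induction ed using Sym2.ind with
    | _ p q =>
      obtain ⟨x, _ | _⟩ := p <;> obtain ⟨y, _ | _⟩ := q
      · exact absurd rfl hadj.1
      · obtain ⟨e, he, rfl, rfl⟩ := eq_inr_of_redGraph_adj_of_notMem_cliqueCover H hadj
          (fun h => hunc ⟨_, h, Sym2.mem_mk_left _ _⟩) (fun h => hunc ⟨_, h, Sym2.mem_mk_right _ _⟩)
        exact ⟨e, he, rfl⟩
      · obtain ⟨e, he, rfl, rfl⟩ := eq_inr_of_redGraph_adj_of_notMem_cliqueCover H hadj.symm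
          (fun h => hunc ⟨_, h, Sym2.mem_mk_right _ _⟩) (fun h => hunc ⟨_, h, Sym2.mem_mk_left _ _⟩)
        exact ⟨e, he, Sym2.eq_swap⟩
      · exact absurd rfl hadj.1
  · rintro ⟨e, he, rfl⟩
    unfold abEdge
    refine ⟨⟨Bool.false_ne_true, .inl ⟨rfl, fun e' h => Sum.inr_injective h ▸ he.1⟩⟩, ?_⟩
    rintro ⟨p, hp, hpe⟩
    rcases Sym2.mem_iff.1 hpe with rfl | rfl
    · exact hp.2 he
    · exact hp

end

theorem stmt_19_general {V : Type*} [Fintype V] (H : SimpleGraph V) (ℓ : ℕ)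
    (K : Finset V) (hK : K.card = ℓ)
    (hclique : ∀ u ∈ K, ∀ v ∈ K, u ≠ v → H.Adj u v)
    (X : Set ((V ⊕ Sym2 V) × Bool))
    (hX : X = {p | ∃ u ∈ K, p = ((Sum.inl u : V ⊕ Sym2 V), false) ∨
                    p = ((Sum.inl u : V ⊕ Sym2 V), true)}
          ∪ {p | ∃ u : V, u ∉ K ∧ p = ((Sum.inl u : V ⊕ Sym2 V), false)}
          ∪ {p | ∃ e ∈ H.edgeSet, ¬(∀ v ∈ e, v ∈ K) ∧
                    p = ((Sum.inr e : V ⊕ Sym2 V), false)}) :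
    X.ncard + ℓ.choose 2 = Fintype.card V + H.edgeSet.ncard + ℓ ∧
    {ed ∈ (redGraph H).edgeSet | ∃ p ∈ X, p ∈ ed}.ncard + ℓ.choose 2
      = (redGraph H).edgeSet.ncard := by
  have hXK : X = cliqueCover H K := by
    subst hX
    ext ⟨u | e, _ | _⟩ <;> simp [cliqueCover, edgesIn, em]
  have hinner := ncard_edgesIn_of_isClique H hclique
  subst hXK hK
  constructor
  · have := ncard_cliqueCover_add_ncard_edgesIn H K
    rw [Nat.card_eq_fintype_card, Set.ncard_coe_finset] at this
    omega
  · rw [← hinner, ← Set.ncard_image_of_injective (edgesIn H K)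
      (abEdge_injective.comp Sum.inr_injective), ← redGraph_edgesAvoiding_cliqueCover_eq_image]
    exact Set.ncard_inter_add_ncard_sdiff_eq_ncard _ _

/-- If `K` is an `ℓ`-clique of `H` (`ℓ ≥ 6`), the set
`X = {a_u, b_u : u ∈ K} ∪ {a_u : u ∉ K} ∪ {a_e : e ∈ E(H) ∖ E(K)}` has size
`|V(H)| + |E(H)| - C(ℓ,2) + ℓ` and covers exactly `‖G‖ - C(ℓ,2)` edges of
`G = redGraph H`. -/
theorem stmt_19 {V : Type*} [Fintype V] (H : SimpleGraph V) (ℓ : ℕ) (hℓ : 6 ≤ ℓ)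
    (K : Finset V) (hK : K.card = ℓ)
    (hclique : ∀ u ∈ K, ∀ v ∈ K, u ≠ v → H.Adj u v)
    (X : Set ((V ⊕ Sym2 V) × Bool))
    (hX : X = {p | ∃ u ∈ K, p = ((Sum.inl u : V ⊕ Sym2 V), false) ∨
                    p = ((Sum.inl u : V ⊕ Sym2 V), true)}
          ∪ {p | ∃ u : V, u ∉ K ∧ p = ((Sum.inl u : V ⊕ Sym2 V), false)}
          ∪ {p | ∃ e ∈ H.edgeSet, ¬(∀ v ∈ e, v ∈ K) ∧
                    p = ((Sum.inr e : V ⊕ Sym2 V), false)}) :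
    X.ncard + ℓ.choose 2 = Fintype.card V + H.edgeSet.ncard + ℓ ∧
    {ed ∈ (redGraph H).edgeSet | ∃ p ∈ X, p ∈ ed}.ncard + ℓ.choose 2
      = (redGraph H).edgeSet.ncard :=
  stmt_19_general H ℓ K hK hclique X hX
end
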